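/- Let R = ℝ[U,V]/(U² + V² − 1) with u, v the images of U, V, and B = R[X,Y,Z]. Let D be the R-derivation on B determined by DX = u, DY = v − 1, DZ = (1 − v)X + uY, which is a locally nilpotent nice R-derivation that is not fixed point free, with kernel A = R[f, g, h] where f = (1 − v)X + uY, g = (1 + v)Y + uX, and h = 2Z + fY − gX. Then the plinth ideal I_1 of D equals the ideal (u, v − 1, f)A of A. -/

import Mathlib

/-!
The inclusion `(u, v - 1, f)A ⊆ I₁` holds because `u = DX`, `v - 1 = DY`, `f = DZ` and `D` is
`A`-linear. Conversely, every `Dp` vanishes at the point `(u, v) = (0, 1)` of the circle.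
Reduce at that point and send `(X, Y, Z) ↦ (0, W₀/2, W₁/2)`: this maps `(f, g, h)` to
`(0, W₀, W₁)`. So if `q = P(f, g, h) ∈ DB` with `P ∈ R[T₀, T₁, T₂]`, then `P(0, W₀, W₁)` has
all coefficients in the kernel of evaluation at `(0, 1)`, which is `(u, v - 1)`; hence
`P ∈ (u, v - 1, T₀)`, and substituting `(f, g, h)` gives `q ∈ (u, v - 1, f)A`.
-/

/-- The coordinate ring `ℝ[U,V]/(U² + V² − 1)` of the circle. -/
noncomputable abbrev CircleRing : Type :=
  MvPolynomial (Fin 2) ℝ ⧸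
    Ideal.span {(MvPolynomial.X 0 : MvPolynomial (Fin 2) ℝ) ^ 2 +
      MvPolynomial.X 1 ^ 2 - 1}

open MvPolynomial

namespace MvPolynomial

theorem sub_C_eval_mem_span_X_sub_C {R σ : Type*} [CommRing R] (x : σ → R)
    (p : MvPolynomial σ R) :
    p - C (eval x p) ∈ Ideal.span (Set.range fun i => X i - C (x i)) := by
  induction p using MvPolynomial.induction_on with
  | C a => simp
  | add p q hp hq => simpa [add_sub_add_comm] using Ideal.add_mem _ hp hq
  | mul_X p i hp =>
    have hXi : X i - C (x i) ∈ Ideal.span (Set.range fun i => X i - C (x i)) :=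
      Ideal.subset_span ⟨i, rfl⟩
    convert Ideal.add_mem _ (Ideal.mul_mem_right (X i) _ hp)
      (Ideal.mul_mem_left _ (C (eval x p)) hXi) using 1
    simp only [eval_mul, eval_X, C_mul]
    ring

theorem exists_eq_X_zero_mul_add_rename_succ {R : Type*} [CommSemiring R] {n : ℕ}
    (P : MvPolynomial (Fin (n + 1)) R) :
    ∃ Q S, P = X 0 * Q + rename Fin.succ S := by
  induction P using MvPolynomial.induction_on with
  | C a => exact ⟨0, C a, by simp⟩
  | add p q hp hq =>
    obtain ⟨Q₁, S₁, rfl⟩ := hp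
    obtain ⟨Q₂, S₂, rfl⟩ := hq
    exact ⟨Q₁ + Q₂, S₁ + S₂, by rw [map_add]; ring⟩
  | mul_X p i hp =>
    obtain ⟨Q, S, rfl⟩ := hp
    induction i using Fin.cases with
    | zero => exact ⟨X 0 * Q + rename Fin.succ S, 0, by rw [map_zero]; ring⟩
    | succ j => exact ⟨Q * X j.succ, S * X j, by rw [map_mul, rename_X]; ring⟩

theorem derivation_mem_of_forall_X_mem {R σ : Type*} [CommRing R]
    (D : Derivation R (MvPolynomial σ R) (MvPolynomial σ R)) (I : Ideal (MvPolynomial σ R))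
    (hX : ∀ i, D (X i) ∈ I) (p : MvPolynomial σ R) : D p ∈ I := by
  have : (Submodule.mkQ I).compDer D = 0 :=
    derivation_ext fun i => (Submodule.Quotient.mk_eq_zero I).2 (hX i)
  exact (Submodule.Quotient.mk_eq_zero I).1 (DFunLike.congr_fun this p)

theorem ker_eval₂Hom_cons_zero_le {R K : Type*} [CommRing R] [CommRing K] {n : ℕ}
    (π : R →+* K) :
    RingHom.ker (eval₂Hom (C.comp π) (Fin.cons 0 X : Fin (n + 1) → MvPolynomial (Fin n) K))
      ≤ Ideal.map C (RingHom.ker π) ⊔ Ideal.span {X 0} := by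
  intro P hP
  obtain ⟨Q, S, rfl⟩ := exists_eq_X_zero_mul_add_rename_succ P
  have hS : S ∈ RingHom.ker (map π : MvPolynomial (Fin n) R →+* _) := by
    simp only [RingHom.mem_ker, map_add, map_mul, eval₂Hom_X', Fin.cons_zero, zero_mul,
      zero_add, coe_eval₂Hom, eval₂_rename, Fin.cons_comp_succ] at hP
    rwa [RingHom.mem_ker, map_eq_eval₂Hom_C_comp]
  rw [ker_map] at hS
  have hrename : Ideal.map (rename Fin.succ : MvPolynomial (Fin n) R →ₐ[R] _).toRingHom
      (Ideal.map C (RingHom.ker π)) = Ideal.map C (RingHom.ker π) := by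
    rw [Ideal.map_map]
    congr 1
    ext; simp
  have hS' : rename Fin.succ S ∈ Ideal.map C (RingHom.ker π) :=
    hrename ▸ Ideal.mem_map_of_mem _ hS
  exact Ideal.add_mem _
    (Ideal.mem_sup_right (Ideal.mul_mem_right _ _ (Ideal.mem_span_singleton_self _)))
    (Ideal.mem_sup_left hS')

theorem two_mul_C_inv_two_mul {σ : Type*} (p : MvPolynomial σ ℝ) : 2 * (C 2⁻¹ * p) = p := by
  rw [← mul_assoc, ← map_ofNat C 2, ← C_mul]
  norm_num

end MvPolynomial

namespace CircleRing

noncomputable def u : CircleRing := Ideal.Quotient.mk _ (X 0)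

noncomputable def v : CircleRing := Ideal.Quotient.mk _ (X 1)

noncomputable def evalNorthPole : CircleRing →+* ℝ :=
  Ideal.Quotient.lift _ (eval ![0, 1]) fun p hp => by
    obtain ⟨c, rfl⟩ := Ideal.mem_span_singleton'.1 hp
    simp

theorem evalNorthPole_mk (p : MvPolynomial (Fin 2) ℝ) :
    evalNorthPole (Ideal.Quotient.mk _ p) = eval ![0, 1] p :=
  Ideal.Quotient.lift_mk _ _ _

theorem evalNorthPole_u : evalNorthPole u = 0 := by simp [u, evalNorthPole_mk]

theorem evalNorthPole_v : evalNorthPole v = 1 := by simp [v, evalNorthPole_mk]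

theorem ker_evalNorthPole : RingHom.ker evalNorthPole = Ideal.span {u, v - 1} := by
  refine le_antisymm (fun r hr => ?_) ?_
  · obtain ⟨p, rfl⟩ := Ideal.Quotient.mk_surjective r
    have hp := Ideal.mem_map_of_mem
      (Ideal.Quotient.mk _ : MvPolynomial (Fin 2) ℝ →+* CircleRing)
      (sub_C_eval_mem_span_X_sub_C ![0, 1] p)
    rw [RingHom.mem_ker, evalNorthPole_mk] at hr
    rw [hr, map_zero, sub_zero, Ideal.map_span, ← Set.range_comp] at hp
    convert hp using 2
    ext r
    simp [Fin.exists_fin_two, u, v, eq_comm]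
  · rw [Ideal.span_le]
    rintro _ (rfl | rfl) <;> simp [evalNorthPole_u, evalNorthPole_v]

noncomputable def f : MvPolynomial (Fin 3) CircleRing :=
  algebraMap _ _ (1 - v) * X 0 + algebraMap _ _ u * X 1

noncomputable def g : MvPolynomial (Fin 3) CircleRing :=
  algebraMap _ _ (1 + v) * X 1 + algebraMap _ _ u * X 0

noncomputable def h : MvPolynomial (Fin 3) CircleRing :=
  2 * X 2 + f * X 1 - g * X 0

noncomputable def reduction : MvPolynomial (Fin 3) CircleRing →+* MvPolynomial (Fin 2) ℝ :=
  eval₂Hom (C.comp evalNorthPole) ![0, C 2⁻¹ * X 0, C 2⁻¹ * X 1]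

@[simp]
theorem reduction_C (r : CircleRing) : reduction (C r) = C (evalNorthPole r) :=
  eval₂Hom_C _ _ _

@[simp]
theorem reduction_X (i : Fin 3) :
    reduction (X i) = ![0, C 2⁻¹ * X 0, C 2⁻¹ * X 1] i :=
  eval₂Hom_X' _ _ _

theorem reduction_f : reduction f = 0 := by
  simp [f, evalNorthPole_u, evalNorthPole_v]

theorem reduction_g : reduction g = X 0 := by
  simp [g, evalNorthPole_u, evalNorthPole_v, one_add_one_eq_two, two_mul_C_inv_two_mul]

theorem reduction_h : reduction h = X 1 := by
  simp [h, reduction_f, reduction_g, two_mul_C_inv_two_mul, map_ofNat]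

theorem reduction_comp_aeval :
    reduction.comp (aeval ![f, g, h]).toRingHom =
      eval₂Hom (C.comp evalNorthPole) (Fin.cons 0 X) := by
  refine ringHom_ext (fun r => ?_) (fun i => ?_)
  · simp
  · simp only [RingHom.comp_apply, AlgHom.toRingHom_eq_coe, RingHom.coe_coe, aeval_X,
      eval₂Hom_X']
    fin_cases i
    · exact reduction_f
    · exact reduction_g
    · exact reduction_h

theorem exists_eq_of_reduction_aeval_eq_zero (P : MvPolynomial (Fin 3) CircleRing)
    (hP : reduction (aeval ![f, g, h] P) = 0) :
    ∃ a b c, P = C u * a + C (v - 1) * b + X 0 * c := by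
  have hker := ker_eval₂Hom_cons_zero_le evalNorthPole (n := 2)
    (by rw [← reduction_comp_aeval]; exact hP)
  rw [ker_evalNorthPole, Ideal.map_span, Set.image_pair, Submodule.mem_sup] at hker
  obtain ⟨_, hS, _, hQ, rfl⟩ := hker
  obtain ⟨a, b, rfl⟩ := Ideal.mem_span_pair.1 hS
  obtain ⟨c, rfl⟩ := Ideal.mem_span_singleton'.1 hQ
  exact ⟨a, b, c, by ring⟩

theorem reduction_derivation_eq_zero
    (D : Derivation CircleRing (MvPolynomial (Fin 3) CircleRing)
      (MvPolynomial (Fin 3) CircleRing))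
    (hDX : D (X 0) = algebraMap _ _ u) (hDY : D (X 1) = algebraMap _ _ (v - 1))
    (hDZ : D (X 2) = f) (p : MvPolynomial (Fin 3) CircleRing) : reduction (D p) = 0 := by
  refine derivation_mem_of_forall_X_mem D (RingHom.ker reduction) (fun i => ?_) p
  fin_cases i
  · simp [hDX, evalNorthPole_u]
  · simp [hDY, evalNorthPole_v]
  · exact hDZ ▸ reduction_f

end CircleRing

theorem stmt17
    (u v : CircleRing)
    (hu : u = Ideal.Quotient.mk _ (MvPolynomial.X 0))
    (hv : v = Ideal.Quotient.mk _ (MvPolynomial.X 1))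
    (D : Derivation CircleRing (MvPolynomial (Fin 3) CircleRing)
        (MvPolynomial (Fin 3) CircleRing))
    (f g h : MvPolynomial (Fin 3) CircleRing)
    (hf : f = algebraMap _ _ (1 - v) * MvPolynomial.X 0
        + algebraMap _ _ u * MvPolynomial.X 1)
    (hg : g = algebraMap _ _ (1 + v) * MvPolynomial.X 1
        + algebraMap _ _ u * MvPolynomial.X 0)
    (hh : h = 2 * MvPolynomial.X 2 + f * MvPolynomial.X 1 - g * MvPolynomial.X 0)
    (hDX : D (MvPolynomial.X 0)
        = algebraMap CircleRing (MvPolynomial (Fin 3) CircleRing) u)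
    (hDY : D (MvPolynomial.X 1)
        = algebraMap CircleRing (MvPolynomial (Fin 3) CircleRing) (v - 1))
    (hDZ : D (MvPolynomial.X 2) = f)
    (hker : ∀ q, D q = 0 ↔ q ∈ Algebra.adjoin CircleRing {f, g, h}) :
    {q : MvPolynomial (Fin 3) CircleRing | D q = 0 ∧ q ∈ Set.range ⇑D}
      = {q : MvPolynomial (Fin 3) CircleRing |
          ∃ c₁ c₂ c₃, D c₁ = 0 ∧ D c₂ = 0 ∧ D c₃ = 0 ∧
            q = algebraMap _ _ u * c₁ + algebraMap _ _ (v - 1) * c₂ + f * c₃} := by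
  obtain rfl : u = CircleRing.u := hu
  obtain rfl : v = CircleRing.v := hv
  obtain rfl : f = CircleRing.f := hf
  obtain rfl : g = CircleRing.g := hg
  obtain rfl : h = CircleRing.h := hh
  have hA : ∀ q, D q = 0 ↔
      q ∈ (aeval (R := CircleRing) ![CircleRing.f, CircleRing.g, CircleRing.h]).range := by
    rw [← Algebra.adjoin_range_eq_range_aeval, Matrix.range_cons, Matrix.range_cons,
      Matrix.range_cons_empty, Set.singleton_union, Set.singleton_union]
    exact hker
  ext q
  constructor
  · rintro ⟨hq, p, rfl⟩
    obtain ⟨P, hP⟩ := (hA _).1 hq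
    obtain ⟨a, b, c, rfl⟩ := CircleRing.exists_eq_of_reduction_aeval_eq_zero P
      (hP ▸ CircleRing.reduction_derivation_eq_zero D hDX hDY hDZ p)
    refine ⟨aeval _ a, aeval _ b, aeval _ c, (hA _).2 ⟨a, rfl⟩, (hA _).2 ⟨b, rfl⟩,
      (hA _).2 ⟨c, rfl⟩, ?_⟩
    simp [← hP, algebraMap_eq]
  · rintro ⟨c₁, c₂, c₃, hc₁, hc₂, hc₃, rfl⟩
    have hDf : D CircleRing.f = 0 := (hA _).2 ⟨X 0, by simp⟩
    refine ⟨by simp [hc₁, hc₂, hc₃, hDf], X 0 * c₁ + X 1 * c₂ + X 2 * c₃, ?_⟩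
    simp [hc₁, hc₂, hc₃, hDX, hDY, hDZ]
    ring
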